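/- The function C defined by the recurrence C(2) = 1, C(3) = 2, and C(n) = 2⌊(n-1)/2⌋ + C(⌊n/2⌋) for n ≥ 4 satisfies C(n) = 2n - 2 - ⌊log₂ n⌋ - ⌊log₂(2n/3)⌋ for all n ≥ 2. -/

import Mathlib

/-!
Let `F n = 2n - 2 - ⌊log₂ n⌋ - ⌊log₂ (2n/3)⌋`. Both floors are `Nat.log 2` of natural numbers
(`n` and `⌊2n/3⌋`), and for `n ≥ 4` each drops by exactly one when `n` is replaced by `⌊n/2⌋`:
for the second, `⌊log₂ ⌊2n/3⌋⌋` and `⌊log₂ ⌊2⌊n/2⌋/3⌋⌋ + 1` both equal `⌊log₂ ⌊n/3⌋⌋ + 1`.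
As `⌊(n-1)/2⌋ + ⌊n/2⌋ = n - 1`, `F` satisfies the recurrence of `C` and agrees with it at 2 and 3.
-/

namespace Nat

theorem log_mul_div_eq_log_div_add_one {b c n : ℕ} (hb : 1 < b) (hc : 0 < c) (hcn : c ≤ n) :
    log b (b * n / c) = log b (n / c) + 1 := by
  have hdiv : b * n / c / b = n / c := by
    rw [Nat.div_div_eq_div_mul, mul_comm c b, Nat.mul_div_mul_left _ _ (by omega)]
  have hpos : 0 < log b (b * n / c) :=
    log_pos hb ((Nat.le_div_iff_mul_le hc).2 (Nat.mul_le_mul_left b hcn))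
  rw [← hdiv, log_div_base]
  omega

theorem log_mul_div_base_div (b n c : ℕ) :
    log b (b * (n / b) / c) = log b (n / c) := by
  refine le_antisymm (log_mono_right (Nat.div_le_div_right (Nat.mul_div_le n b))) ?_
  calc log b (n / c) = log b (n / c / b * b) := (log_div_mul_self b _).symm
    _ ≤ log b (b * (n / b) / c) := log_mono_right <| by
      rw [Nat.div_div_eq_div_mul, mul_comm c b, ← Nat.div_div_eq_div_mul, mul_comm]
      exact Nat.mul_div_le_mul_div_assoc b (n / b) c

end Nat

theorem Real.floor_logb_natCast_div {b a c : ℕ} (hc : 0 < c) (hca : c ≤ a) :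
    ⌊Real.logb b ((a : ℝ) / c)⌋ = Nat.log b (a / c) := by
  have hone : (1 : ℝ) ≤ (a : ℝ) / c := by
    rw [one_le_div (by exact_mod_cast hc)]
    exact_mod_cast hca
  rw [Real.floor_logb_natCast (by positivity), Int.log_of_one_le_right _ hone,
    Nat.floor_div_natCast, Nat.floor_natCast]

def ladderCount (n : ℕ) : ℤ := 2 * n - 2 - Nat.log 2 n - Nat.log 2 (2 * n / 3)

theorem ladderCount_two : ladderCount 2 = 1 := by norm_num [ladderCount]

theorem ladderCount_three : ladderCount 3 = 2 := by norm_num [ladderCount]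

theorem ladderCount_eq_of_four_le {n : ℕ} (hn : 4 ≤ n) :
    ladderCount n = 2 * ((n - 1) / 2 : ℕ) + ladderCount (n / 2) := by
  have hlog : Nat.log 2 n = Nat.log 2 (n / 2) + 1 := by
    have := Nat.log_pos (b := 2) one_lt_two (by omega : 2 ≤ n)
    rw [Nat.log_div_base]
    omega
  have hlog_two_mul : Nat.log 2 (2 * n / 3) = Nat.log 2 (2 * (n / 2) / 3) + 1 := by
    rw [Nat.log_mul_div_base_div, Nat.log_mul_div_eq_log_div_add_one one_lt_two three_pos (by omega)]
  have hhalves : (n - 1) / 2 + n / 2 = n - 1 := by omega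
  simp only [ladderCount, hlog, hlog_two_mul]
  push_cast
  omega

theorem ladderCount_eq_floor_logb {n : ℕ} (hn : 2 ≤ n) :
    ladderCount n = 2 * n - 2 - ⌊Real.logb 2 (n : ℝ)⌋ - ⌊Real.logb 2 ((2 * n : ℝ) / 3)⌋ := by
  have hfloor : ⌊Real.logb 2 (n : ℝ)⌋ = Nat.log 2 n := by
    simpa using Real.floor_logb_natCast_div (b := 2) (a := n) one_pos (by omega)
  have hfloor_two_mul : ⌊Real.logb 2 ((2 * n : ℝ) / 3)⌋ = Nat.log 2 (2 * n / 3) := by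
    simpa using Real.floor_logb_natCast_div (b := 2) (a := 2 * n) three_pos (by omega)
  rw [ladderCount, hfloor, hfloor_two_mul]

/-- The function `C` defined by `C 2 = 1`, `C 3 = 2` and
`C n = 2⌊(n-1)/2⌋ + C ⌊n/2⌋` for `n ≥ 4` satisfies
`C n = 2n - 2 - ⌊log₂ n⌋ - ⌊log₂ (2n/3)⌋` for all `n ≥ 2`. -/
theorem ladder1_count_formula (C : ℕ → ℕ)
    (hC2 : C 2 = 1) (hC3 : C 3 = 2)
    (hCrec : ∀ n, 4 ≤ n → C n = 2 * ((n - 1) / 2) + C (n / 2)) :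
    ∀ n, 2 ≤ n →
      (C n : ℤ) = 2 * n - 2 - ⌊Real.logb 2 (n : ℝ)⌋ - ⌊Real.logb 2 ((2 * n : ℝ) / 3)⌋ := by
  intro n hn
  rw [← ladderCount_eq_floor_logb hn]
  induction n using Nat.strong_induction_on with
  | _ n ih =>
    rcases lt_or_ge n 4 with hsmall | hlarge
    · interval_cases n
      · rw [hC2, ladderCount_two]; rfl
      · rw [hC3, ladderCount_three]; rfl
    · rw [hCrec n hlarge, ladderCount_eq_of_four_le hlarge, ← ih (n / 2) (by omega) (by omega)]
      norm_cast
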